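/- Suppose the intersection matrix (E_i · E_j) of the exceptional curves E_1, ..., E_m of a birational morphism of smooth projective surfaces is negative definite. If G = ∑ g_i E_i satisfies G · E_j ≥ 0 for all j, then g_i ≤ 0 for all i. -/

import Mathlib

/-!
Split `g = g⁺ - g⁻` into positive and negative parts. Since `g⁺` and `g⁻` have disjoint supports,
only off-diagonal entries of `M` pair them, so `g⁺ ⬝ᵥ M *ᵥ g⁻ ≥ 0`; together with
`g⁺ ⬝ᵥ M *ᵥ g ≥ 0` this gives `g⁺ ⬝ᵥ M *ᵥ g⁺ ≥ 0`, and negative definiteness forces `g⁺ = 0`.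
-/

open Matrix

variable {ι R : Type*} [Fintype ι]

section Ring

variable [CommRing R] [LinearOrder R] [IsStrictOrderedRing R]

lemma posPart_mul_negPart_eq_zero (a : R) : a⁺ * a⁻ = 0 := by
  rcases le_total a 0 with ha | ha
  · rw [posPart_eq_zero.mpr ha, zero_mul]
  · rw [negPart_eq_zero.mpr ha, mul_zero]

lemma Matrix.dotProduct_mulVec_nonneg_of_disjoint {M : Matrix ι ι R}
    (hoff : ∀ i j, i ≠ j → 0 ≤ M i j) {u v : ι → R} (hu : 0 ≤ u) (hv : 0 ≤ v)
    (huv : ∀ i, u i * v i = 0) : 0 ≤ u ⬝ᵥ M *ᵥ v := by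
  simp only [dotProduct, mulVec, Finset.mul_sum]
  refine Finset.sum_nonneg fun i _ => Finset.sum_nonneg fun j _ => ?_
  rcases eq_or_ne i j with rfl | hij
  · rw [mul_left_comm, huv, mul_zero]
  · exact mul_nonneg (hu i) (mul_nonneg (hoff i j hij) (hv j))

lemma Matrix.posPart_dotProduct_mulVec_posPart_nonneg {M : Matrix ι ι R}
    (hoff : ∀ i j, i ≠ j → 0 ≤ M i j) {g : ι → R} (hg : 0 ≤ M *ᵥ g) :
    0 ≤ g⁺ ⬝ᵥ M *ᵥ g⁺ := by
  have hcross : 0 ≤ g⁺ ⬝ᵥ M *ᵥ g⁻ :=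
    dotProduct_mulVec_nonneg_of_disjoint hoff (posPart_nonneg g) (negPart_nonneg g)
      fun i => posPart_mul_negPart_eq_zero (g i)
  have hpair : 0 ≤ g⁺ ⬝ᵥ M *ᵥ g :=
    Finset.sum_nonneg fun i _ => mul_nonneg ((posPart_nonneg g) i) (hg i)
  have hsplit : g⁺ ⬝ᵥ M *ᵥ g⁺ = g⁺ ⬝ᵥ M *ᵥ g + g⁺ ⬝ᵥ M *ᵥ g⁻ := by
    rw [← sub_eq_iff_eq_add, ← dotProduct_sub, ← mulVec_sub, posPart_sub_negPart]
  linarith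

end Ring

lemma Matrix.nonpos_of_negDef_of_mulVec_nonneg {M : Matrix ι ι ℝ} (hnegdef : (-M).PosDef)
    (hoff : ∀ i j, i ≠ j → 0 ≤ M i j) {g : ι → ℝ} (hg : 0 ≤ M *ᵥ g) : g ≤ 0 := by
  by_contra hpos
  have hne : g⁺ ≠ 0 := fun h => hpos (posPart_eq_zero.mp h)
  have hneg : 0 < -(g⁺ ⬝ᵥ M *ᵥ g⁺) := by
    simpa [neg_mulVec] using hnegdef.dotProduct_mulVec_pos hne
  linarith [posPart_dotProduct_mulVec_posPart_nonneg hoff hg]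

theorem stmt19_general (m : ℕ) (M : Matrix (Fin m) (Fin m) ℝ)
    (hnegdef : (-M).PosDef)
    (hoff : ∀ i j, i ≠ j → 0 ≤ M i j)
    (g : Fin m → ℝ) (h : ∀ j, 0 ≤ M.mulVec g j) :
    ∀ i, g i ≤ 0 :=
  Matrix.nonpos_of_negDef_of_mulVec_nonneg hnegdef hoff h

/-- Linear-algebraic Negativity Lemma: if the symmetric real matrix `M` is
negative definite with nonnegative off-diagonal entries and `g` satisfies
`(M·g)_j ≥ 0` for all `j`, then `g ≤ 0` componentwise. -/
theorem stmt19 (m : ℕ) (M : Matrix (Fin m) (Fin m) ℝ)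
    (hsymm : M.IsSymm) (hnegdef : (-M).PosDef)
    (hoff : ∀ i j, i ≠ j → 0 ≤ M i j)
    (g : Fin m → ℝ) (h : ∀ j, 0 ≤ M.mulVec g j) :
    ∀ i, g i ≤ 0 :=
  stmt19_general m M hnegdef hoff g h
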